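/- Let β = (β_0, 2, 2, ...) with β_L = 2 for all L ≥ 1, and m ≥ 1. Then for every nonzero G ∈ ℕ^m with ord_β(Σ_i g^i) > min_i ord_β(g^i), there exists X ∈ ℕ^m with σ_β(X + G) = σ_β(X). Consequently the maximum Sprague-Grundy system {C ≠ 0 : ∀X, σ_β(X+C) ≠ σ_β(X)} equals 𝒞_β = {C ≠ 0 : ord_β(Σ c^i) = min_i ord_β(c^i)}. -/

import Mathlib

open scoped BigOperators

/-- β̂_L = β_0 ⋯ β_{L-1}, the place value of digit L in mixed base β. -/
def bhat (β : ℕ → ℕ) (L : ℕ) : ℕ := ∏ i ∈ Finset.range L, β i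

/-- The L-th digit of n in the mixed base β. -/
def mdigit (β : ℕ → ℕ) (n L : ℕ) : ℕ := n / bhat β L % β L

/-- Digit-wise addition modulo β_L in mixed base β. -/
def moplus (β : ℕ → ℕ) (n h : ℕ) : ℕ :=
  ∑ L ∈ Finset.range (n + h + 1), ((mdigit β n L + mdigit β h L) % β L) * bhat β L

/-- Digit-wise subtraction modulo β_L in mixed base β. -/
def mominus (β : ℕ → ℕ) (n h : ℕ) : ℕ :=
  ∑ L ∈ Finset.range (n + h + 1), ((β L + mdigit β n L - mdigit β h L) % β L) * bhat β L

/-- σ_β(X) = x^0 ⊕ ⋯ ⊕ x^{m-1}: the digit-wise Nim sum in mixed base β. -/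
def msigma (β : ℕ → ℕ) {m : ℕ} (X : Fin m → ℕ) : ℕ :=
  ∑ L ∈ Finset.range (∑ i, X i + 1), ((∑ i, mdigit β (X i) L) % β L) * bhat β L

/-- Hamming weight: number of nonzero components. -/
def hamwt {m : ℕ} (C : Fin m → ℕ) : ℕ := (Finset.univ.filter (fun i => C i ≠ 0)).card

/-- ord_β(n): the largest L with β̂_L ∣ n (⊤ for n = 0). -/
def mord (β : ℕ → ℕ) (n : ℕ) : ℕ∞ :=
  if n = 0 then ⊤ else (Nat.findGreatest (fun L => bhat β L ∣ n) n : ℕ∞)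

/-- 𝒞 is a Sprague-Grundy system of σ_β: its members are nonzero moves and
σ_β satisfies the mex recursion of the take-away game Γ(ℕ^m, 𝒞), i.e. σ_β is the
Sprague-Grundy function of that game. -/
def IsSGSystem (β : ℕ → ℕ) {m : ℕ} (𝒞 : Set (Fin m → ℕ)) : Prop :=
  (∀ C ∈ 𝒞, C ≠ 0) ∧
  ∀ X : Fin m → ℕ, msigma β X =
    sInf {n : ℕ | ∀ C ∈ 𝒞, (∀ i, C i ≤ X i) → msigma β (fun i => X i - C i) ≠ n}

/-!
For β = (b, 2, 2, …) one has σ_β(X) = (Σ xⁱ mod b) + b · ⨁ᵢ ⌊xⁱ / b⌋, with ⨁ the binary Nim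
sum, so σ_β(X + C) = σ_β(X) iff b ∣ Σ cⁱ and the Nim sum of the quotients by b is unchanged.
Let L = min ord_β cⁱ and cⁱ = β̂_L kⁱ. For L ≥ 1, adding C adds 2^(L-1) kⁱ to the quotients,
which flips bit L - 1 of their Nim sum iff Σ kⁱ is odd, i.e. iff ord_β(Σ cⁱ) = L.
If instead Σ kⁱ is even while some kⁱ is odd, a witness exists by induction on Σ kⁱ: taking the
low digit of xⁱ equal to b - 1 or 0 decides which coordinates carry, and carrying at one or two
coordinates with a nonzero low digit leaves a smaller quotient vector of the same kind
(or zero). For L = 0 (b ∣ Σ cⁱ, but b ∤ cʲ for some j) the same carry step in base b reduces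
the claim to this binary statement.
-/

open Finset

def xorSum : {m : ℕ} → (Fin m → ℕ) → ℕ
  | 0, _ => 0
  | _ + 1, X => X 0 ^^^ xorSum (fun i => X i.succ)

lemma xorSum_mod_two {m : ℕ} (X : Fin m → ℕ) : xorSum X % 2 = (∑ i, X i) % 2 := by
  induction m with
  | zero => rfl
  | succ m ih =>
    rw [xorSum, Fin.sum_univ_succ, Nat.xor_mod_two_eq, Nat.add_mod, ih, ← Nat.add_mod]

lemma xorSum_div_two {m : ℕ} (X : Fin m → ℕ) :
    xorSum X / 2 = xorSum (fun i => X i / 2) := by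
  induction m with
  | zero => simp [xorSum]
  | succ m ih => rw [xorSum, xorSum, Nat.xor_div_two, ih]

lemma xorSum_eq_sum_mod_two_add {m : ℕ} (X : Fin m → ℕ) :
    xorSum X = (∑ i, X i) % 2 + 2 * xorSum (fun i => X i / 2) := by
  rw [← xorSum_mod_two, ← xorSum_div_two, Nat.mod_add_div]

lemma xorSum_div_two_pow_mod_two {m : ℕ} (X : Fin m → ℕ) (L : ℕ) :
    xorSum X / 2 ^ L % 2 = (∑ i, X i / 2 ^ L % 2) % 2 := by
  induction L generalizing X with
  | zero =>
    simp only [pow_zero, Nat.div_one]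
    rw [xorSum_mod_two, sum_nat_mod]
  | succ L ih => simp only [pow_succ', ← Nat.div_div_eq_div_mul, xorSum_div_two, ih]

lemma xorSum_lt_two_pow {m : ℕ} (X : Fin m → ℕ) {N : ℕ} (h : ∀ i, X i < 2 ^ N) :
    xorSum X < 2 ^ N := by
  induction m with
  | zero => exact Nat.two_pow_pos N
  | succ m ih => exact Nat.xor_lt_two_pow (h 0) (ih _ fun i => h i.succ)

lemma sum_range_div_two_pow_mod_two_mul (z N : ℕ) :
    ∑ L ∈ range N, z / 2 ^ L % 2 * 2 ^ L = z % 2 ^ N := by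
  induction N with
  | zero => simp [Nat.mod_one]
  | succ N ih => rw [sum_range_succ, ih, pow_succ, Nat.mod_mul]; ring

lemma mod_add_mul_eq_mod_add_mul_iff {a c b q q' : ℕ} (hb : 0 < b) :
    (a + c) % b + b * q = a % b + b * q' ↔ b ∣ c ∧ q = q' := by
  constructor
  · intro h
    have hmod := congrArg (· % b) h
    have hdiv := congrArg (· / b) h
    simp only [Nat.add_mul_mod_self_left, Nat.mod_mod, Nat.add_mul_div_left _ _ hb,
      Nat.div_eq_of_lt (Nat.mod_lt _ hb), zero_add] at hmod hdiv
    exact ⟨Nat.add_modEq_left_iff.mp hmod, hdiv⟩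
  · rintro ⟨hc, rfl⟩
    rw [Nat.add_modEq_left_iff.mpr hc]

lemma xorSum_add_eq_iff {m : ℕ} (X C : Fin m → ℕ) :
    xorSum (fun i => X i + C i) = xorSum X ↔
      2 ∣ ∑ i, C i ∧ xorSum (fun i => (X i + C i) / 2) = xorSum (fun i => X i / 2) := by
  rw [xorSum_eq_sum_mod_two_add, xorSum_eq_sum_mod_two_add X, sum_add_distrib]
  exact mod_add_mul_eq_mod_add_mul_iff two_pos

lemma xorSum_add_two_pow_mul_eq_iff {m : ℕ} (ν : ℕ) (Y k : Fin m → ℕ) :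
    xorSum (fun i => Y i + 2 ^ ν * k i) = xorSum Y ↔
      xorSum (fun i => Y i / 2 ^ ν + k i) = xorSum (fun i => Y i / 2 ^ ν) := by
  induction ν generalizing Y with
  | zero => simp
  | succ ν ih =>
    have hdiv : ∀ i, (Y i + 2 ^ (ν + 1) * k i) / 2 = Y i / 2 + 2 ^ ν * k i := fun i => by
      rw [pow_succ', mul_assoc, Nat.add_mul_div_left _ _ two_pos]
    have hsum : 2 ∣ ∑ i, 2 ^ (ν + 1) * k i :=
      dvd_sum fun i _ => (dvd_pow_self 2 ν.succ_ne_zero).mul_right _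
    simp only [xorSum_add_eq_iff, hsum, hdiv, true_and, ih, Nat.div_div_eq_div_mul, ← pow_succ']

lemma exists_ne_not_dvd_of_dvd_sum {ι : Type*} [Fintype ι] [DecidableEq ι] {b : ℕ}
    (G : ι → ℕ) (hsum : b ∣ ∑ i, G i) {j : ι} (hj : ¬ b ∣ G j) :
    ∃ j', j ≠ j' ∧ ¬ b ∣ G j' := by
  by_contra! h
  rw [← add_sum_erase _ _ (mem_univ j)] at hsum
  exact hj ((Nat.dvd_add_left (dvd_sum fun i hi => h i (ne_of_mem_erase hi).symm)).mp hsum)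

lemma sum_add_ite_mem {ι : Type*} [Fintype ι] [DecidableEq ι] (q : ι → ℕ) (S : Finset ι) :
    ∑ i, (q i + if i ∈ S then 1 else 0) = ∑ i, q i + #S := by
  simp [sum_add_distrib]

lemma exists_subset_pair_parity {ι : Type*} [Fintype ι] [DecidableEq ι] (q : ι → ℕ)
    {j j' : ι} (hne : j ≠ j') :
    ∃ S ⊆ {j, j'}, (#S ≤ 1 ∨ 0 < ∑ i, q i) ∧
      ((∀ i, q i + (if i ∈ S then 1 else 0) = 0) ∨
        (2 ∣ ∑ i, (q i + if i ∈ S then 1 else 0) ∧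
          ∃ i, ¬ 2 ∣ q i + if i ∈ S then 1 else 0)) := by
  simp_rw [sum_add_ite_mem]
  by_cases hodd : 2 ∣ ∑ i, q i
  · by_cases hq : ∀ i, 2 ∣ q i
    · by_cases hq0 : ∀ i, q i = 0
      · exact ⟨∅, empty_subset _, by simp, Or.inl (by simpa using hq0)⟩
      · obtain ⟨i₁, hi₁⟩ := not_forall.mp hq0
        refine ⟨{j, j'}, subset_rfl, Or.inr ?_, Or.inr ⟨?_, j, ?_⟩⟩
        · exact lt_of_lt_of_le (Nat.pos_of_ne_zero hi₁) (single_le_sum (by simp) (mem_univ i₁))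
        · rw [card_pair hne]; exact dvd_add hodd dvd_rfl
        · rw [if_pos (mem_insert_self _ _), Nat.dvd_add_right (hq j)]
          norm_num
    · obtain ⟨i₀, hi₀⟩ := not_forall.mp hq
      exact ⟨∅, empty_subset _, by simp, Or.inr ⟨by simpa using hodd, i₀, by simpa using hi₀⟩⟩
  · obtain ⟨i₀, hi₀⟩ : ∃ i, ¬ 2 ∣ q i := by
      by_contra! h
      exact hodd (dvd_sum fun i _ => h i)
    set k := if j = i₀ then j' else j with hk
    have hki₀ : k ≠ i₀ := by
      rw [hk]; split_ifs with h
      · exact h ▸ hne.symm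
      · exact h
    refine ⟨{k}, ?_, by simp, Or.inr ⟨?_, i₀, by simpa [hki₀.symm] using hi₀⟩⟩
    · rw [singleton_subset_iff, hk]; split_ifs <;> simp
    · rw [card_singleton]; omega

lemma mul_sum_div_add_two_le_sum {ι : Type*} [Fintype ι] [DecidableEq ι] {b : ℕ} (G : ι → ℕ)
    {j j' : ι} (hne : j ≠ j') (hj : ¬ b ∣ G j) (hj' : ¬ b ∣ G j') :
    b * ∑ i, G i / b + 2 ≤ ∑ i, G i := by
  have hpair := sum_le_sum_of_subset (f := fun i => G i % b) (subset_univ {j, j'})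
  rw [sum_pair hne] at hpair
  have hj0 := Nat.pos_of_ne_zero (mt Nat.dvd_of_mod_eq_zero hj)
  have hj'0 := Nat.pos_of_ne_zero (mt Nat.dvd_of_mod_eq_zero hj')
  calc b * ∑ i, G i / b + 2 ≤ ∑ i, (b * (G i / b) + G i % b) := by
        rw [sum_add_distrib, mul_sum]; omega
    _ = ∑ i, G i := sum_congr rfl fun i _ => Nat.div_add_mod _ _

lemma mul_add_ite_add_div {b u g : ℕ} (hb : 0 < b) (c : Prop) [Decidable c] (hc : c → ¬ b ∣ g) :
    (b * u + (if c then b - 1 else 0) + g) / b = u + (g / b + if c then 1 else 0) := by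
  split_ifs with h
  · have hg := Nat.pos_of_ne_zero (mt Nat.dvd_of_mod_eq_zero (hc h))
    have hgb := Nat.div_add_mod g b
    have hlt := Nat.mod_lt g hb
    have e : b * u + (b - 1) + g = (g % b - 1) + b * (u + (g / b + 1)) := by
      rw [mul_add, mul_add, mul_one]; omega
    rw [e, Nat.add_mul_div_left _ _ hb, Nat.div_eq_of_lt (by omega), zero_add]
  · rw [add_zero, add_zero, Nat.mul_add_div hb]

-- The witness has low digit `b - 1` on `S` and `0` elsewhere, so exactly the coordinates in `S`
-- carry when `G` is added.
lemma exists_xorSum_add_div_eq {m b : ℕ} (hb : 2 ≤ b) (G : Fin m → ℕ)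
    (hsum : b ∣ ∑ i, G i) {j : Fin m} (hj : ¬ b ∣ G j)
    (hcore : ∀ h : Fin m → ℕ, ∑ i, h i < ∑ i, G i → 2 ∣ ∑ i, h i → (∃ i, ¬ 2 ∣ h i) →
      ∃ u, xorSum (fun i => u i + h i) = xorSum u) :
    ∃ X : Fin m → ℕ, xorSum (fun i => (X i + G i) / b) = xorSum (fun i => X i / b) := by
  obtain ⟨j', hne, hj'⟩ := exists_ne_not_dvd_of_dvd_sum G hsum hj
  obtain ⟨S, hS, hsize, hpar⟩ := exists_subset_pair_parity (fun i => G i / b) hne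
  have hcarry : ∀ i ∈ S, ¬ b ∣ G i := fun i hi => by
    rcases mem_insert.mp (hS hi) with rfl | hi <;> simp_all
  have hlt : ∑ i, (G i / b + if i ∈ S then 1 else 0) < ∑ i, G i := by
    have hbound := mul_sum_div_add_two_le_sum G hne hj hj'
    have hcard : #S ≤ 2 := (card_le_card hS).trans card_le_two
    have hmul : 2 * ∑ i, G i / b ≤ b * ∑ i, G i / b := Nat.mul_le_mul_right _ hb
    rw [sum_add_ite_mem]
    omega
  obtain ⟨u, hu⟩ : ∃ u : Fin m → ℕ,
      xorSum (fun i => u i + (G i / b + if i ∈ S then 1 else 0)) = xorSum u := by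
    rcases hpar with h0 | ⟨heven, hodd⟩
    · exact ⟨0, by simp only [h0, add_zero]⟩
    · exact hcore _ hlt heven hodd
  refine ⟨fun i => b * u i + if i ∈ S then b - 1 else 0, ?_⟩
  have hb0 : 0 < b := by omega
  convert hu using 2 <;> funext i
  · exact mul_add_ite_add_div hb0 (i ∈ S) (hcarry i)
  · rw [Nat.mul_add_div hb0, Nat.div_eq_of_lt (by split_ifs <;> omega), add_zero]

theorem exists_xorSum_add_eq {m : ℕ} (h : Fin m → ℕ) (heven : 2 ∣ ∑ i, h i)
    (hodd : ∃ i, ¬ 2 ∣ h i) : ∃ u : Fin m → ℕ, xorSum (fun i => u i + h i) = xorSum u := by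
  induction hn : ∑ i, h i using Nat.strong_induction_on generalizing h with
  | _ n ih =>
    obtain ⟨j, hj⟩ := hodd
    obtain ⟨X, hX⟩ := exists_xorSum_add_div_eq le_rfl h heven hj
      fun h' hlt heven' hodd' => ih _ (hn ▸ hlt) h' heven' hodd' rfl
    exact ⟨X, (xorSum_add_eq_iff X h).mpr ⟨heven, hX⟩⟩

lemma bhat_succ (β : ℕ → ℕ) (L : ℕ) : bhat β (L + 1) = bhat β L * β L :=
  prod_range_succ β L

lemma bhat_dvd_bhat (β : ℕ → ℕ) {L M : ℕ} (h : L ≤ M) : bhat β L ∣ bhat β M :=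
  prod_dvd_prod_of_subset _ _ β (range_subset_range.mpr h)

section MixedBase

variable {β : ℕ → ℕ}

lemma bhat_succ_eq (hβ : ∀ L, 1 ≤ L → β L = 2) (L : ℕ) : bhat β (L + 1) = β 0 * 2 ^ L := by
  induction L with
  | zero => simp [bhat]
  | succ L ih => rw [bhat_succ, ih, hβ (L + 1) (by omega), pow_succ, mul_assoc]

lemma le_bhat (hβ0 : 0 < β 0) (hβ : ∀ L, 1 ≤ L → β L = 2) (L : ℕ) : L ≤ bhat β L := by
  cases L with
  | zero => exact Nat.zero_le _
  | succ L =>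
    rw [bhat_succ_eq hβ]
    exact Nat.lt_two_pow_self.trans_le (Nat.le_mul_of_pos_left _ hβ0)

lemma bhat_succ_succ_dvd_bhat_succ_mul_iff (hβ0 : 0 < β 0) (hβ : ∀ L, 1 ≤ L → β L = 2)
    (ν n : ℕ) : bhat β (ν + 2) ∣ bhat β (ν + 1) * n ↔ 2 ∣ n := by
  rw [bhat_succ β (ν + 1), hβ (ν + 1) (by omega), Nat.mul_dvd_mul_iff_left]
  rw [bhat_succ_eq hβ]
  positivity

lemma natCast_le_mord_iff (hβ0 : 0 < β 0) (hβ : ∀ L, 1 ≤ L → β L = 2) (n L : ℕ) :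
    (L : ℕ∞) ≤ mord β n ↔ bhat β L ∣ n := by
  unfold mord
  split_ifs with hn
  · simp [hn]
  · rw [Nat.cast_le]
    refine ⟨fun hle => (bhat_dvd_bhat β hle).trans ?_, fun hdvd => ?_⟩
    · exact Nat.findGreatest_spec (P := fun L => bhat β L ∣ n) (Nat.zero_le n) (by simp [bhat])
    · exact Nat.le_findGreatest
        ((le_bhat hβ0 hβ L).trans (Nat.le_of_dvd (Nat.pos_of_ne_zero hn) hdvd)) hdvd

lemma natCast_le_iInf_mord_iff (hβ0 : 0 < β 0) (hβ : ∀ L, 1 ≤ L → β L = 2) {m : ℕ}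
    (C : Fin m → ℕ) (L : ℕ) : (L : ℕ∞) ≤ ⨅ i, mord β (C i) ↔ ∀ i, bhat β L ∣ C i := by
  simp only [le_iInf_iff, natCast_le_mord_iff hβ0 hβ]

lemma iInf_mord_le_mord_sum (hβ0 : 0 < β 0) (hβ : ∀ L, 1 ≤ L → β L = 2) {m : ℕ}
    (C : Fin m → ℕ) : ⨅ i, mord β (C i) ≤ mord β (∑ i, C i) :=
  ENat.forall_natCast_le_iff_le.mp fun L hL => (natCast_le_mord_iff hβ0 hβ _ L).mpr
    (dvd_sum fun i _ => (natCast_le_iInf_mord_iff hβ0 hβ C L).mp hL i)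

lemma msigma_eq (hβ : ∀ L, 1 ≤ L → β L = 2) {m : ℕ} (X : Fin m → ℕ) :
    msigma β X = (∑ i, X i) % β 0 + β 0 * xorSum (fun i => X i / β 0) := by
  have hdigit : ∀ L i, mdigit β (X i) (L + 1) = X i / β 0 / 2 ^ L % 2 := fun L i => by
    rw [mdigit, bhat_succ_eq hβ, hβ (L + 1) (by omega), Nat.div_div_eq_div_mul]
  have hlt : xorSum (fun i => X i / β 0) < 2 ^ ∑ i, X i := xorSum_lt_two_pow _ fun i =>
    ((Nat.div_le_self _ _).trans (single_le_sum (by simp) (mem_univ i))).trans_lt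
      Nat.lt_two_pow_self
  rw [msigma, sum_range_succ', ← Nat.mod_eq_of_lt hlt,
    ← sum_range_div_two_pow_mod_two_mul, mul_sum, add_comm]
  congr 1
  · simp [mdigit, bhat, ← sum_nat_mod]
  · refine sum_congr rfl fun L _ => ?_
    rw [xorSum_div_two_pow_mod_two, bhat_succ_eq hβ, hβ (L + 1) (by omega)]
    simp only [hdigit]
    ring

lemma msigma_add_eq_iff (hβ0 : 0 < β 0) (hβ : ∀ L, 1 ≤ L → β L = 2) {m : ℕ}
    (X C : Fin m → ℕ) :
    msigma β (fun i => X i + C i) = msigma β X ↔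
      β 0 ∣ ∑ i, C i ∧
        xorSum (fun i => (X i + C i) / β 0) = xorSum (fun i => X i / β 0) := by
  rw [msigma_eq hβ, msigma_eq hβ X, sum_add_distrib]
  exact mod_add_mul_eq_mod_add_mul_iff hβ0

lemma msigma_add_bhat_mul_eq_iff (hβ0 : 0 < β 0) (hβ : ∀ L, 1 ≤ L → β L = 2) {m : ℕ}
    (ν : ℕ) (X k : Fin m → ℕ) :
    msigma β (fun i => X i + bhat β (ν + 1) * k i) = msigma β X ↔
      xorSum (fun i => X i / bhat β (ν + 1) + k i) = xorSum (fun i => X i / bhat β (ν + 1)) := by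
  have hdiv : ∀ i, (X i + β 0 * 2 ^ ν * k i) / β 0 = X i / β 0 + 2 ^ ν * k i := fun i => by
    rw [mul_assoc, Nat.add_mul_div_left _ _ hβ0]
  have hsum : β 0 ∣ ∑ i, β 0 * 2 ^ ν * k i := dvd_sum fun i _ => (dvd_mul_right _ _).mul_right _
  simp only [msigma_add_eq_iff hβ0 hβ, bhat_succ_eq hβ, hsum, hdiv, true_and,
    xorSum_add_two_pow_mul_eq_iff, Nat.div_div_eq_div_mul]

theorem exists_msigma_add_eq (hβ0 : 2 ≤ β 0) (hβ : ∀ L, 1 ≤ L → β L = 2) {m : ℕ}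
    (G : Fin m → ℕ) (L : ℕ) (hall : ∀ i, bhat β L ∣ G i) (hsum : bhat β (L + 1) ∣ ∑ i, G i)
    (hj : ∃ j, ¬ bhat β (L + 1) ∣ G j) :
    ∃ X : Fin m → ℕ, msigma β (fun i => X i + G i) = msigma β X := by
  obtain ⟨j, hj⟩ := hj
  cases L with
  | zero =>
    rw [bhat_succ_eq hβ, pow_zero, mul_one] at hsum hj
    obtain ⟨X, hX⟩ := exists_xorSum_add_div_eq hβ0 G hsum hj
      fun h _ heven hodd => exists_xorSum_add_eq h heven hodd
    exact ⟨X, (msigma_add_eq_iff (by omega) hβ X G).mpr ⟨hsum, hX⟩⟩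
  | succ ν =>
    choose k hk using hall
    obtain rfl : G = fun i => bhat β (ν + 1) * k i := funext hk
    rw [← mul_sum, bhat_succ_succ_dvd_bhat_succ_mul_iff (by omega) hβ] at hsum
    rw [bhat_succ_succ_dvd_bhat_succ_mul_iff (by omega) hβ] at hj
    obtain ⟨w, hw⟩ := exists_xorSum_add_eq k hsum ⟨j, hj⟩
    have hpos : 0 < bhat β (ν + 1) := by rw [bhat_succ_eq hβ]; positivity
    refine ⟨fun i => bhat β (ν + 1) * w i,
      (msigma_add_bhat_mul_eq_iff (by omega) hβ ν _ k).mpr ?_⟩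
    simpa only [Nat.mul_div_cancel_left _ hpos] using hw

theorem msigma_add_ne (hβ0 : 0 < β 0) (hβ : ∀ L, 1 ≤ L → β L = 2) {m : ℕ}
    (C : Fin m → ℕ) (L : ℕ) (hall : ∀ i, bhat β L ∣ C i) (hsum : ¬ bhat β (L + 1) ∣ ∑ i, C i)
    (X : Fin m → ℕ) : msigma β (fun i => X i + C i) ≠ msigma β X := by
  cases L with
  | zero =>
    rw [bhat_succ_eq hβ, pow_zero, mul_one] at hsum
    exact fun h => hsum ((msigma_add_eq_iff hβ0 hβ X C).mp h).1
  | succ ν =>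
    choose k hk using hall
    obtain rfl : C = fun i => bhat β (ν + 1) * k i := funext hk
    rw [← mul_sum, bhat_succ_succ_dvd_bhat_succ_mul_iff hβ0 hβ] at hsum
    rw [Ne, msigma_add_bhat_mul_eq_iff hβ0 hβ, xorSum_add_eq_iff]
    exact fun h => hsum h.1

theorem exists_msigma_add_eq_of_iInf_mord_lt (hβ0 : 2 ≤ β 0) (hβ : ∀ L, 1 ≤ L → β L = 2)
    {m : ℕ} (G : Fin m → ℕ) (hlt : ⨅ i, mord β (G i) < mord β (∑ i, G i)) :
    ∃ X : Fin m → ℕ, msigma β (fun i => X i + G i) = msigma β X := by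
  have hβ0' : 0 < β 0 := by omega
  obtain ⟨L, hL⟩ := ENat.ne_top_iff_exists.mp hlt.ne_top
  rw [← hL] at hlt
  refine exists_msigma_add_eq hβ0 hβ G L ((natCast_le_iInf_mord_iff hβ0' hβ G L).mp hL.le)
    ((natCast_le_mord_iff hβ0' hβ _ _).mp (by exact_mod_cast Order.add_one_le_of_lt hlt)) ?_
  by_contra! h
  have := (natCast_le_iInf_mord_iff hβ0' hβ G (L + 1)).mpr h
  rw [← hL, Nat.cast_le] at this
  omega

theorem msigma_add_ne_of_mord_sum_eq_iInf (hβ0 : 0 < β 0) (hβ : ∀ L, 1 ≤ L → β L = 2)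
    {m : ℕ} (C : Fin m → ℕ) (hC : C ≠ 0) (heq : mord β (∑ i, C i) = ⨅ i, mord β (C i))
    (X : Fin m → ℕ) : msigma β (fun i => X i + C i) ≠ msigma β X := by
  have hsum : ∑ i, C i ≠ 0 := fun h => hC (funext fun i => sum_eq_zero_iff.mp h i (mem_univ i))
  obtain ⟨L, hL⟩ : ∃ L : ℕ, (L : ℕ∞) = mord β (∑ i, C i) := ⟨_, (if_neg hsum).symm⟩
  refine msigma_add_ne hβ0 hβ C L ((natCast_le_iInf_mord_iff hβ0 hβ C L).mp (heq ▸ hL.le))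
    (fun h => ?_) X
  have := (natCast_le_mord_iff hβ0 hβ _ _).mpr h
  rw [← hL, Nat.cast_le] at this
  omega

end MixedBase

theorem stmt13_general (β : ℕ → ℕ) (hβ0 : 2 ≤ β 0) (hβ : ∀ L, 1 ≤ L → β L = 2)
    {m : ℕ} :
    (∀ G : Fin m → ℕ, G ≠ 0 → (⨅ i, mord β (G i)) < mord β (∑ i, G i) →
      ∃ X : Fin m → ℕ, msigma β (fun i => X i + G i) = msigma β X) ∧
    {C : Fin m → ℕ | C ≠ 0 ∧
        ∀ X : Fin m → ℕ, msigma β (fun i => X i + C i) ≠ msigma β X} =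
      {C : Fin m → ℕ | C ≠ 0 ∧ mord β (∑ i, C i) = ⨅ i, mord β (C i)} := by
  refine ⟨fun G _ => exists_msigma_add_eq_of_iInf_mord_lt hβ0 hβ G, ?_⟩
  ext C
  refine and_congr_right fun hC =>
    ⟨fun hne => ?_, msigma_add_ne_of_mord_sum_eq_iInf (by omega) hβ C hC⟩
  refine le_antisymm (not_lt.mp fun hlt => ?_) (iInf_mord_le_mord_sum (by omega) hβ C)
  obtain ⟨X, hX⟩ := exists_msigma_add_eq_of_iInf_mord_lt hβ0 hβ C hlt
  exact hne X hX

/-- For β = (β₀, 2, 2, …): every nonzero G with ord_β(Σ g^i) > min_i ord_β(g^i)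
fails to change σ_β somewhere, and consequently the maximum Sprague-Grundy
system equals the canonical system 𝒞_β. -/
theorem stmt13 (β : ℕ → ℕ) (hβ0 : 2 ≤ β 0) (hβ : ∀ L, 1 ≤ L → β L = 2)
    {m : ℕ} (hm : 1 ≤ m) :
    (∀ G : Fin m → ℕ, G ≠ 0 → (⨅ i, mord β (G i)) < mord β (∑ i, G i) →
      ∃ X : Fin m → ℕ, msigma β (fun i => X i + G i) = msigma β X) ∧
    {C : Fin m → ℕ | C ≠ 0 ∧
        ∀ X : Fin m → ℕ, msigma β (fun i => X i + C i) ≠ msigma β X} =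
      {C : Fin m → ℕ | C ≠ 0 ∧ mord β (∑ i, C i) = ⨅ i, mord β (C i)} :=
  stmt13_general β hβ0 hβ
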